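/- For all real numbers h1, h2, P, p with 0 < h1 ≤ h2, P > 0 and p ∈ [0, 1], the heterogeneous first-order term C*_s := p·(1/2)·ln(1 + h2·P) + (1 − p)·(1/2)·ln(1 + h1·P) + ((1 − p)/2)·( h2/(1 + h2·P) − h1/(1 + h1·P) )·P satisfies C*_s ≤ (1/2)·ln(1 + h2·P). -/

import Mathlib

open Real Set

theorem monotoneOn_log_one_add_sub_div_one_add :
    MonotoneOn (fun x : ℝ => log (1 + x) - x / (1 + x)) (Ici 0) := by
  intro a ha b hb hab
  simp only [mem_Ici] at ha hb
  have ha1 : 0 < 1 + a := by linarith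
  have hb1 : 0 < 1 + b := by linarith
  have hlog : (b - a) / (1 + b) ≤ log (1 + b) - log (1 + a) := by
    rw [← log_div hb1.ne' ha1.ne']
    calc (b - a) / (1 + b) = 1 - ((1 + b) / (1 + a))⁻¹ := by field_simp; ring
      _ ≤ log ((1 + b) / (1 + a)) := one_sub_inv_le_log_of_pos (by positivity)
  have hfrac : b / (1 + b) - a / (1 + a) ≤ (b - a) / (1 + b) := by
    rw [div_sub_div _ _ hb1.ne' ha1.ne', div_le_div_iff₀ (by positivity) hb1]
    nlinarith [mul_nonneg (mul_nonneg (sub_nonneg.2 hab) hb1.le) ha]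
  linarith

theorem hetero_first_order_le_homo (h1 h2 P p : ℝ) (hh1 : 0 < h1) (h12 : h1 ≤ h2)
    (hP : 0 < P) (hp1 : p ≤ 1) :
    p * (1 / 2 * Real.log (1 + h2 * P)) + (1 - p) * (1 / 2 * Real.log (1 + h1 * P)) +
        (1 - p) / 2 * (h2 / (1 + h2 * P) - h1 / (1 + h1 * P)) * P ≤
      1 / 2 * Real.log (1 + h2 * P) := by
  set f : ℝ → ℝ := fun x => log (1 + x) - x / (1 + x)
  have hgap : f (h1 * P) ≤ f (h2 * P) :=
    monotoneOn_log_one_add_sub_div_one_add (mem_Ici.2 (by positivity))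
      (mem_Ici.2 (by nlinarith)) (by gcongr)
  have hsplit : p * (1 / 2 * log (1 + h2 * P)) + (1 - p) * (1 / 2 * log (1 + h1 * P)) +
        (1 - p) / 2 * (h2 / (1 + h2 * P) - h1 / (1 + h1 * P)) * P =
      1 / 2 * log (1 + h2 * P) - (1 - p) / 2 * (f (h2 * P) - f (h1 * P)) := by
    simp only [f]
    ring
  rw [hsplit]
  have hweighted : 0 ≤ (1 - p) / 2 * (f (h2 * P) - f (h1 * P)) :=
    mul_nonneg (by linarith) (sub_nonneg.2 hgap)
  linarith
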